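/- Let n ≥ 1, let X : ℝ^n → ℝ^n be a C² vector field, let L(x,y) = Σ_j (y^j - X^j(x))² be the least squares Lagrangian, and let G^i(x,y) = -(1/2)[ Σ_j (∂X^i/∂x^j - ∂X^j/∂x^i) y^j + Σ_j (∂X^j/∂x^i) X^j(x) ] be its semispray coefficients. Then a C² curve x : ℝ → ℝ^n satisfies the Euler–Lagrange equations ∂L/∂x^i(x(t), ẋ(t)) - (d/dt)[∂L/∂y^i(x(t), ẋ(t))] = 0 for all i and all t if and only if it satisfies d²x^i/dt² + 2 G^i(x(t), ẋ(t)) = 0 for all i and all t. -/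

import Mathlib

/-!
Along a curve, `∂L/∂yⁱ = 2 (ẋⁱ - Xⁱ)` and `∂L/∂xⁱ = -2 ∑ⱼ ∂ᵢXʲ (ẋʲ - Xʲ)`, while the chain rule gives
`d/dt ∂L/∂yⁱ = 2 (ẍⁱ - ∑ⱼ ∂ⱼXⁱ ẋʲ)`. Collecting terms, the Euler–Lagrange expression is exactly
`-2 (ẍⁱ + 2 Gⁱ(x, ẋ))`, so one side vanishes iff the other does.
-/

/-- Partial derivative ∂f/∂xʲ of a scalar function on ℝⁿ. -/
noncomputable def pd {n : ℕ} (f : (Fin n → ℝ) → ℝ) (j : Fin n) (x : Fin n → ℝ) : ℝ :=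
  fderiv ℝ f x (Pi.single j 1)

/-- Partial derivative in the x-slot of a function of (x, y). -/
noncomputable def pdx {n : ℕ} (f : (Fin n → ℝ) → (Fin n → ℝ) → ℝ) (i : Fin n)
    (x y : Fin n → ℝ) : ℝ :=
  fderiv ℝ (fun x' => f x' y) x (Pi.single i 1)

/-- Partial derivative in the y-slot of a function of (x, y). -/
noncomputable def pdy {n : ℕ} (f : (Fin n → ℝ) → (Fin n → ℝ) → ℝ) (i : Fin n)
    (x y : Fin n → ℝ) : ℝ :=
  fderiv ℝ (f x) y (Pi.single i 1)

section

variable {n : ℕ} {X : (Fin n → ℝ) → Fin n → ℝ} {L : (Fin n → ℝ) → (Fin n → ℝ) → ℝ}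

theorem pd_apply_eq_fderiv {x : Fin n → ℝ}
    (hX : DifferentiableAt ℝ X x) (i j : Fin n) :
    pd (fun x' => X x' j) i x = fderiv ℝ X x (Pi.single i 1) j := by
  rw [pd, fderiv_apply hX]
  rfl

theorem fderiv_apply_eq_sum_pd {x : Fin n → ℝ}
    (hX : DifferentiableAt ℝ X x) (v : Fin n → ℝ) (j : Fin n) :
    fderiv ℝ X x v j = ∑ i, pd (fun x' => X x' j) i x * v i := by
  conv_lhs => rw [pi_eq_sum_univ' v]
  simp [map_sum, Finset.sum_apply, pd_apply_eq_fderiv hX, mul_comm]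

theorem fderiv_sum_sq_apply {E : Type*} [NormedAddCommGroup E] [NormedSpace ℝ E]
    {f : E → Fin n → ℝ} {x : E} (hf : DifferentiableAt ℝ f x) (v : E) :
    fderiv ℝ (fun x => ∑ j, f x j ^ 2) x v = 2 * ∑ j, f x j * fderiv ℝ f x v j := by
  have hsum : HasFDerivAt (fun x => ∑ j, f x j ^ 2)
      (∑ j, (2 * f x j) • (ContinuousLinearMap.proj j).comp (fderiv ℝ f x)) x :=
    HasFDerivAt.fun_sum fun j _ => by
      simpa using ((hasFDerivAt_apply j (f x)).comp x hf.hasFDerivAt).pow 2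
  simp [hsum.fderiv, Finset.mul_sum, mul_assoc]

theorem pdy_leastSquares (hL : ∀ x y, L x y = ∑ j, (y j - X x j) ^ 2) (i : Fin n)
    (x y : Fin n → ℝ) : pdy L i x y = 2 * (y i - X x i) := by
  have hLx : L x = fun y => ∑ j, (y - X x) j ^ 2 := funext fun y => hL x y
  rw [pdy, hLx, fderiv_sum_sq_apply (by fun_prop)]
  simp [fderiv_sub_const, Pi.single_apply]

theorem pdx_leastSquares {x : Fin n → ℝ} (hX : DifferentiableAt ℝ X x)
    (hL : ∀ x y, L x y = ∑ j, (y j - X x j) ^ 2) (i : Fin n) (y : Fin n → ℝ) :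
    pdx L i x y = -2 * ∑ j, pd (fun x' => X x' j) i x * (y j - X x j) := by
  have hLy : (fun x' => L x' y) = fun x' => ∑ j, (y - X x') j ^ 2 := funext fun x' => hL x' y
  rw [pdx, hLy, fderiv_sum_sq_apply (by fun_prop)]
  simp [fderiv_const_sub, pd_apply_eq_fderiv hX, Finset.mul_sum, mul_comm]

theorem hasDerivAt_pdy_leastSquares_comp {c : ℝ → Fin n → ℝ} {t : ℝ}
    (hX : DifferentiableAt ℝ X (c t)) (hL : ∀ x y, L x y = ∑ j, (y j - X x j) ^ 2)
    (hc : DifferentiableAt ℝ c t) (hc' : DifferentiableAt ℝ (deriv c) t) (i : Fin n) :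
    HasDerivAt (fun s => pdy L i (c s) (deriv c s))
      (2 * (deriv (deriv c) t i - ∑ j, pd (fun x' => X x' i) j (c t) * deriv c t j)) t := by
  simp only [pdy_leastSquares hL, ← fderiv_apply_eq_sum_pd hX]
  have hXc := hX.hasFDerivAt.comp_hasDerivAt t hc.hasDerivAt
  exact ((hasDerivAt_pi.1 hc'.hasDerivAt i).sub (hasDerivAt_pi.1 hXc i)).const_mul 2

theorem euler_lagrange_leastSquares_eq_semispray {c : ℝ → Fin n → ℝ} {t : ℝ}
    (hX : DifferentiableAt ℝ X (c t)) (hL : ∀ x y, L x y = ∑ j, (y j - X x j) ^ 2)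
    {G : Fin n → (Fin n → ℝ) → (Fin n → ℝ) → ℝ} (hG : ∀ i x y, G i x y =
      -(1 / 2 : ℝ) * ((∑ j, (pd (fun x' => X x' i) j x - pd (fun x' => X x' j) i x) * y j)
        + ∑ j, pd (fun x' => X x' j) i x * X x j))
    (hc : DifferentiableAt ℝ c t) (hc' : DifferentiableAt ℝ (deriv c) t) (i : Fin n) :
    pdx L i (c t) (deriv c t) - deriv (fun s => pdy L i (c s) (deriv c s)) t
      = -2 * (deriv (deriv c) t i + 2 * G i (c t) (deriv c t)) := by
  rw [pdx_leastSquares hX hL, (hasDerivAt_pdy_leastSquares_comp hX hL hc hc' i).deriv, hG]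
  simp only [mul_sub, sub_mul, Finset.sum_sub_distrib]
  ring

end

theorem euler_lagrange_iff_semispray_general
    (n : ℕ)
    (X : (Fin n → ℝ) → (Fin n → ℝ)) (hX : ContDiff ℝ 2 X)
    (L : (Fin n → ℝ) → (Fin n → ℝ) → ℝ)
    (hL : ∀ x y, L x y = ∑ j, (y j - X x j) ^ 2)
    (G : Fin n → (Fin n → ℝ) → (Fin n → ℝ) → ℝ)
    (hG : ∀ i x y, G i x y =
      -(1 / 2 : ℝ) * ((∑ j, (pd (fun x' => X x' i) j x - pd (fun x' => X x' j) i x) * y j)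
        + ∑ j, pd (fun x' => X x' j) i x * X x j))
    (c : ℝ → (Fin n → ℝ)) (hc : ContDiff ℝ 2 c) :
    (∀ i t, pdx L i (c t) (deriv c t)
        - deriv (fun s => pdy L i (c s) (deriv c s)) t = 0) ↔
    (∀ i t, deriv (deriv c) t i + 2 * G i (c t) (deriv c t) = 0) := by
  have hc' : Differentiable ℝ (deriv c) := (hc.deriv' (n := 1)).differentiable one_ne_zero
  have key := fun i t => euler_lagrange_leastSquares_eq_semispray
    (hX.differentiable two_ne_zero (c t)) hL hG (hc.differentiable two_ne_zero t) (hc' t) i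
  simp only [key, mul_eq_zero, neg_eq_zero, two_ne_zero, false_or]

theorem euler_lagrange_iff_semispray
    (n : ℕ) (hn : 1 ≤ n)
    (X : (Fin n → ℝ) → (Fin n → ℝ)) (hX : ContDiff ℝ 2 X)
    (L : (Fin n → ℝ) → (Fin n → ℝ) → ℝ)
    (hL : ∀ x y, L x y = ∑ j, (y j - X x j) ^ 2)
    (G : Fin n → (Fin n → ℝ) → (Fin n → ℝ) → ℝ)
    (hG : ∀ i x y, G i x y =
      -(1 / 2 : ℝ) * ((∑ j, (pd (fun x' => X x' i) j x - pd (fun x' => X x' j) i x) * y j)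
        + ∑ j, pd (fun x' => X x' j) i x * X x j))
    (c : ℝ → (Fin n → ℝ)) (hc : ContDiff ℝ 2 c) :
    (∀ i t, pdx L i (c t) (deriv c t)
        - deriv (fun s => pdy L i (c s) (deriv c s)) t = 0) ↔
    (∀ i t, deriv (deriv c) t i + 2 * G i (c t) (deriv c t) = 0) :=
  euler_lagrange_iff_semispray_general n X hX L hL G hG c hc
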